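/- Let R = k[x_1, x_2] and F = X_1^{a_1}X_2^{a_2}(c_1 X_1^{b_1} − c_2 X_2^{b_2}) with b_1, b_2 ≥ 1, c_1, c_2 ≠ 0, and v_1 = v_2 =: v where v_j = min{i ≥ 1 : a_j + 1 ≤ i b_j}. Then Ann_R(F) = (p, q) where p = Σ_{i=0}^{v} c_1^{v−i} c_2^i x_1^{i b_1} x_2^{(v−i) b_2} and q = Σ_{i=0}^{v−1} c_1^{v−1−i} c_2^i x_1^{a_1+1−(v−1−i)b_1} x_2^{a_2+1−i b_2}. -/

import Mathlib

/-!
Write `F = c₁ X^(g + B₁) - c₂ X^(g + B₂)` with `g = (a₁, a₂)`, `B₁ = (b₁, 0)`, `B₂ = (0, b₂)`.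
Contraction is a module action, so `Ann(F)` is an ideal, and `f ∘ F = 0` says that
`c₁ f_(g + B₁ - β) = c₂ f_(g + B₂ - β)` for every `β`, a term being absent when `β` is too large.

Both `p` and `q` are chains `∑_{i + j = m} c₁^j c₂^i x^(α + i B₁ + j B₂)`; contracted against `F`
the chain telescopes to its two end terms, which vanish because `v` is minimal with
`a_j < v b_j`. Moreover `x₂^(a₂+1-(v-1)b₂) p - c₂ x₁^(v b₁-a₁-1) q = c₁^v x₂^(a₂+b₂+1)`.

Conversely, `p`, `q` and `x₂^(a₂+b₂+1)` form a Gröbner basis of `Ann(F)` for the lex order: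
if the leading exponent `(x, y)` of some `f ∈ Ann(F)` were divisible by none of their leading
exponents, then the relations above would either give `f` a nonzero coefficient at
`(x + b₁, y - b₂)`, beyond the leading one, or carry `f_(x,y) ≠ 0` along the diagonal to
`(x - (v-1)b₁, y + (v-1)b₂)`, where all coefficients of `f` vanish.
-/

open scoped Classical
open MvPolynomial Finset

/-- The contraction action of `k[x_1,...,x_N]` on `k[X_1,...,X_N]`. -/
noncomputable def contract {k : Type*} [CommRing k] {σ : Type*}
    (f F : MvPolynomial σ k) : MvPolynomial σ k :=
  ∑ a ∈ f.support, ∑ b ∈ F.support,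
    if a ≤ b then MvPolynomial.monomial (b - a) (MvPolynomial.coeff a f * MvPolynomial.coeff b F)
    else 0

/-- `Ann_R(F) = {f ∈ R : f ∘ F = 0}` as a set. -/
noncomputable def annSet {k : Type*} [CommRing k] {σ : Type*}
    (F : MvPolynomial σ k) : Set (MvPolynomial σ k) :=
  {f | contract f F = 0}

/-- `p = Σ_{i=0}^{v} c_1^{v-i} c_2^i x_1^{i b_1} x_2^{(v-i) b_2}`. -/
noncomputable def pPoly (k : Type*) [Field k] (b1 b2 v : ℕ) (c1 c2 : k) :
    MvPolynomial (Fin 2) k :=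
  ∑ i ∈ Finset.range (v + 1),
    MvPolynomial.C (c1 ^ (v - i) * c2 ^ i) * MvPolynomial.X 0 ^ (i * b1) *
      MvPolynomial.X 1 ^ ((v - i) * b2)

/-- `q = Σ_{i=0}^{v-1} c_1^{v-1-i} c_2^i x_1^{a_1+1-(v-1-i)b_1} x_2^{a_2+1-i b_2}`. -/
noncomputable def qPoly (k : Type*) [Field k] (a1 a2 b1 b2 v : ℕ) (c1 c2 : k) :
    MvPolynomial (Fin 2) k :=
  ∑ i ∈ Finset.range v,
    MvPolynomial.C (c1 ^ (v - 1 - i) * c2 ^ i) * MvPolynomial.X 0 ^ (a1 + 1 - (v - 1 - i) * b1) *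
      MvPolynomial.X 1 ^ (a2 + 1 - i * b2)

section Contraction

variable {σ k : Type*} [CommRing k]

theorem coeff_contract (f F : MvPolynomial σ k) (β : σ →₀ ℕ) :
    coeff β (contract f F) = ∑ a ∈ f.support, coeff a f * coeff (a + β) F := by
  simp only [contract, coeff_sum]
  refine Finset.sum_congr rfl fun a _ => ?_
  rw [Finset.sum_eq_single (a + β)]
  · simp [coeff_monomial]
  · intro b _ hb
    split_ifs with hab
    · rw [coeff_monomial, if_neg]
      rintro rfl
      exact hb (add_tsub_cancel_of_le hab).symm
    · rfl
  · intro h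
    simp [notMem_support_iff.mp h]

theorem coeff_contract_of_support_subset {f : MvPolynomial σ k} {s : Finset (σ →₀ ℕ)}
    (hs : f.support ⊆ s) (F : MvPolynomial σ k) (β : σ →₀ ℕ) :
    coeff β (contract f F) = ∑ a ∈ s, coeff a f * coeff (a + β) F := by
  rw [coeff_contract]
  exact Finset.sum_subset hs fun a _ ha => by rw [notMem_support_iff.mp ha, zero_mul]

theorem coeff_contract_monomial (a : σ →₀ ℕ) (c : k) (F : MvPolynomial σ k) (β : σ →₀ ℕ) :
    coeff β (contract (monomial a c) F) = c * coeff (a + β) F := by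
  rw [coeff_contract_of_support_subset support_monomial_subset, Finset.sum_singleton,
    coeff_monomial, if_pos rfl]

theorem contract_add_left (f g F : MvPolynomial σ k) :
    contract (f + g) F = contract f F + contract g F := by
  ext β
  rw [coeff_add, coeff_contract_of_support_subset (support_add (p := f) (q := g)),
    coeff_contract_of_support_subset Finset.subset_union_left,
    coeff_contract_of_support_subset Finset.subset_union_right, ← Finset.sum_add_distrib]
  simp only [coeff_add, add_mul]

theorem contract_add_right (f F G : MvPolynomial σ k) :
    contract f (F + G) = contract f F + contract f G := by
  ext β
  simp only [coeff_add, coeff_contract, mul_add, Finset.sum_add_distrib]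

theorem contract_sum_left {ι : Type*} (s : Finset ι) (f : ι → MvPolynomial σ k)
    (F : MvPolynomial σ k) : contract (∑ i ∈ s, f i) F = ∑ i ∈ s, contract (f i) F :=
  map_sum (AddMonoidHom.mk' (contract · F) fun f g => contract_add_left f g F) f s

theorem contract_zero_right (f : MvPolynomial σ k) : contract f 0 = 0 := by
  simp [contract]

theorem contract_mul_left (f g F : MvPolynomial σ k) :
    contract (g * f) F = contract g (contract f F) := by
  induction g using MvPolynomial.induction_on' with
  | monomial a c =>
    induction f using MvPolynomial.induction_on' with
    | monomial b d =>
      ext β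
      rw [monomial_mul, coeff_contract_monomial, coeff_contract_monomial,
        coeff_contract_monomial, add_comm a b, add_assoc, mul_assoc]
    | add f₁ f₂ h₁ h₂ =>
      rw [mul_add, contract_add_left, contract_add_left, h₁, h₂, contract_add_right]
  | add g₁ g₂ h₁ h₂ => rw [add_mul, contract_add_left, contract_add_left, h₁, h₂]

noncomputable def annIdeal (F : MvPolynomial σ k) : Ideal (MvPolynomial σ k) where
  carrier := annSet F
  zero_mem' := by simp [annSet, contract]
  add_mem' {f g} (hf : contract f F = 0) (hg : contract g F = 0) :=
    show contract (f + g) F = 0 by rw [contract_add_left, hf, hg, add_zero]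
  smul_mem' g f (hf : contract f F = 0) :=
    show contract (g * f) F = 0 by rw [contract_mul_left, hf, contract_zero_right]

theorem mem_annIdeal {f F : MvPolynomial σ k} : f ∈ annIdeal F ↔ contract f F = 0 := Iff.rfl

section Binomial

variable (g B₁ B₂ : σ →₀ ℕ) (c₁ c₂ : k)

noncomputable def binomialForm : MvPolynomial σ k :=
  monomial (g + B₁) c₁ - monomial (g + B₂) c₂

noncomputable def chainPoly (α : σ →₀ ℕ) (n : ℕ) : MvPolynomial σ k :=
  ∑ x ∈ antidiagonal n, monomial (α + x.1 • B₁ + x.2 • B₂) (c₁ ^ x.2 * c₂ ^ x.1)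

variable {g B₁ B₂ c₁ c₂}

theorem coeff_contract_monomial_right (f : MvPolynomial σ k) (u : σ →₀ ℕ) (c : k)
    (β : σ →₀ ℕ) :
    coeff β (contract f (monomial u c)) = if β ≤ u then c * coeff (u - β) f else 0 := by
  rw [coeff_contract]
  simp only [coeff_monomial]
  split_ifs with hβ
  · rw [Finset.sum_eq_single (u - β)]
    · rw [if_pos (tsub_add_cancel_of_le hβ).symm, mul_comm]
    · intro a _ ha
      rw [if_neg fun h => ha (by rw [h, add_tsub_cancel_right]), mul_zero]
    · intro h
      rw [notMem_support_iff.mp h, zero_mul]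
  · exact Finset.sum_eq_zero fun a _ => by
      rw [if_neg fun h => hβ (by rw [h]; exact le_add_self), mul_zero]

theorem coeff_contract_binomialForm (f : MvPolynomial σ k) (β : σ →₀ ℕ) :
    coeff β (contract f (binomialForm g B₁ B₂ c₁ c₂)) =
      (if β ≤ g + B₁ then c₁ * coeff (g + B₁ - β) f else 0) -
        (if β ≤ g + B₂ then c₂ * coeff (g + B₂ - β) f else 0) := by
  rw [binomialForm, sub_eq_add_neg, ← map_neg, contract_add_right, coeff_add,
    coeff_contract_monomial_right, coeff_contract_monomial_right, sub_eq_add_neg]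
  split_ifs <;> ring

variable {f : MvPolynomial σ k} {x y β : σ →₀ ℕ}

theorem mul_coeff_eq_of_mem_annIdeal (hf : f ∈ annIdeal (binomialForm g B₁ B₂ c₁ c₂))
    (hx : x + β = g + B₁) (hy : y + β = g + B₂) : c₁ * coeff x f = c₂ * coeff y f := by
  have h := congrArg (coeff β) (mem_annIdeal.mp hf)
  rw [coeff_contract_binomialForm, coeff_zero, ← hx, ← hy, if_pos le_add_self,
    if_pos le_add_self, add_tsub_cancel_right, add_tsub_cancel_right] at h
  exact sub_eq_zero.mp h

variable [NoZeroDivisors k]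

theorem coeff_eq_zero_of_mem_annIdeal_of_not_le_right
    (hf : f ∈ annIdeal (binomialForm g B₁ B₂ c₁ c₂)) (hc₁ : c₁ ≠ 0)
    (hx : x + β = g + B₁) (hβ : ¬ β ≤ g + B₂) : coeff x f = 0 := by
  have h := congrArg (coeff β) (mem_annIdeal.mp hf)
  rw [coeff_contract_binomialForm, coeff_zero, if_neg hβ, ← hx, if_pos le_add_self,
    add_tsub_cancel_right, sub_zero] at h
  exact (mul_eq_zero.mp h).resolve_left hc₁

theorem coeff_eq_zero_of_mem_annIdeal_of_not_le_left
    (hf : f ∈ annIdeal (binomialForm g B₁ B₂ c₁ c₂)) (hc₂ : c₂ ≠ 0)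
    (hy : y + β = g + B₂) (hβ : ¬ β ≤ g + B₁) : coeff y f = 0 := by
  have h := congrArg (coeff β) (mem_annIdeal.mp hf)
  rw [coeff_contract_binomialForm, coeff_zero, if_neg hβ, ← hy, if_pos le_add_self,
    add_tsub_cancel_right, zero_sub, neg_eq_zero] at h
  exact (mul_eq_zero.mp h).resolve_left hc₂

theorem coeff_add_eq_zero_iff_of_mem_annIdeal
    (hf : f ∈ annIdeal (binomialForm g B₁ B₂ c₁ c₂)) (hc₁ : c₁ ≠ 0) (hc₂ : c₂ ≠ 0)
    (hy : y ≤ g) : coeff (y + B₁) f = 0 ↔ coeff (y + B₂) f = 0 := by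
  have hβ : ∀ B : σ →₀ ℕ, y + B + (g - y) = g + B := fun B => by
    rw [add_right_comm, add_tsub_cancel_of_le hy]
  have h := mul_coeff_eq_of_mem_annIdeal hf (hβ B₁) (hβ B₂)
  constructor <;> intro h0 <;> rw [h0, mul_zero] at h
  · exact (mul_eq_zero.mp h.symm).resolve_left hc₂
  · exact (mul_eq_zero.mp h).resolve_left hc₁

theorem coeff_add_nsmul_eq_zero_iff_of_mem_annIdeal
    (hf : f ∈ annIdeal (binomialForm g B₁ B₂ c₁ c₂)) (hc₁ : c₁ ≠ 0) (hc₂ : c₂ ≠ 0)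
    (n : ℕ) {z : σ →₀ ℕ} (hz : z + n • B₁ + n • B₂ ≤ g + B₁ + B₂) :
    coeff (z + n • B₁) f = 0 ↔ coeff (z + n • B₂) f = 0 := by
  induction n generalizing z with
  | zero => simp
  | succ n ih =>
    have hstep : z + n • B₁ ≤ g := by
      have h : z + n • B₁ + (B₁ + B₂) + n • B₂ = z + (n + 1) • B₁ + (n + 1) • B₂ := by
        rw [succ_nsmul, succ_nsmul]; abel
      refine le_of_add_le_add_right (a := B₁ + B₂) ?_
      rw [← add_assoc g]
      exact le_trans le_self_add (h ▸ hz)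
    have hz' : z + B₂ + n • B₁ + n • B₂ ≤ g + B₁ + B₂ :=
      calc z + B₂ + n • B₁ + n • B₂ ≤ z + B₂ + n • B₁ + n • B₂ + B₁ := le_self_add
        _ = z + (n + 1) • B₁ + (n + 1) • B₂ := by rw [succ_nsmul, succ_nsmul]; abel
        _ ≤ g + B₁ + B₂ := hz
    rw [succ_nsmul, ← add_assoc, coeff_add_eq_zero_iff_of_mem_annIdeal hf hc₁ hc₂ hstep,
      add_right_comm, ih hz', succ_nsmul', add_assoc]

end Binomial

section Chain

variable {B₁ B₂ : σ →₀ ℕ} {c₁ c₂ : k}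

theorem chainPoly_mem_annIdeal {g α : σ →₀ ℕ} {n : ℕ} (h₁ : ¬ α + n • B₂ ≤ g + B₁)
    (h₂ : ¬ α + n • B₁ ≤ g + B₂) :
    chainPoly B₁ B₂ c₁ c₂ α n ∈ annIdeal (binomialForm g B₁ B₂ c₁ c₂) := by
  rw [mem_annIdeal]
  ext β
  -- The `(i, j)`-term of the chain contracts to `Φ (i, j + 1) - Φ (i + 1, j)`, so the sum over
  -- `i + j = n` telescopes to `Φ (0, n + 1) - Φ (n + 1, 0)`, and both ends vanish by `h₁`, `h₂`.
  set Φ : ℕ × ℕ → k := fun x =>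
    if g + B₁ + B₂ = α + x.1 • B₁ + x.2 • B₂ + β then c₁ ^ x.2 * c₂ ^ x.1 else 0
  have hterm : ∀ x : ℕ × ℕ,
      coeff β (contract (monomial (α + x.1 • B₁ + x.2 • B₂) (c₁ ^ x.2 * c₂ ^ x.1))
        (binomialForm g B₁ B₂ c₁ c₂)) = Φ (x.1, x.2 + 1) - Φ (x.1 + 1, x.2) := by
    rintro ⟨i, j⟩
    have hB₁ : g + B₁ + B₂ = α + i • B₁ + (j + 1) • B₂ + β ↔
        g + B₁ = α + i • B₁ + j • B₂ + β := by
      rw [show α + i • B₁ + (j + 1) • B₂ + β = α + i • B₁ + j • B₂ + β + B₂ by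
        rw [succ_nsmul]; abel, add_left_inj]
    have hB₂ : g + B₁ + B₂ = α + (i + 1) • B₁ + j • B₂ + β ↔
        g + B₂ = α + i • B₁ + j • B₂ + β := by
      rw [show α + (i + 1) • B₁ + j • B₂ + β = α + i • B₁ + j • B₂ + β + B₁ by
        rw [succ_nsmul]; abel, add_right_comm g, add_left_inj]
    simp only [Φ, coeff_contract_monomial, binomialForm, coeff_sub, coeff_monomial, hB₁, hB₂,
      pow_succ]
    split_ifs <;> ring
  have hΦ₀ : Φ (0, n + 1) = 0 := if_neg fun h => h₁ <| by
    refine le_of_add_le_add_right (a := B₂) ?_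
    rw [h, zero_smul, add_zero, succ_nsmul, ← add_assoc]
    exact le_self_add
  have hΦ₁ : Φ (n + 1, 0) = 0 := if_neg fun h => h₂ <| by
    refine le_of_add_le_add_right (a := B₁) ?_
    rw [add_right_comm g, h, zero_smul, add_zero, succ_nsmul, ← add_assoc]
    exact le_self_add
  have hsucc := Finset.Nat.sum_antidiagonal_succ (f := Φ) (n := n)
  have hsucc' := Finset.Nat.sum_antidiagonal_succ' (f := Φ) (n := n)
  rw [hΦ₀, zero_add] at hsucc
  rw [hΦ₁, zero_add] at hsucc'
  rw [chainPoly, contract_sum_left, coeff_sum, coeff_zero,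
    Finset.sum_congr rfl fun x _ => hterm x, Finset.sum_sub_distrib, ← hsucc, ← hsucc', sub_self]

theorem monomial_mul_chainPoly (γ : σ →₀ ℕ) (c : k) (α : σ →₀ ℕ) (n : ℕ) :
    monomial γ c * chainPoly B₁ B₂ c₁ c₂ α n = C c * chainPoly B₁ B₂ c₁ c₂ (γ + α) n := by
  simp only [chainPoly, Finset.mul_sum, monomial_mul, C_mul_monomial, add_assoc]

theorem chainPoly_succ (α : σ →₀ ℕ) (n : ℕ) :
    chainPoly B₁ B₂ c₁ c₂ α (n + 1) =
      monomial B₁ c₂ * chainPoly B₁ B₂ c₁ c₂ α n +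
        monomial (α + (n + 1) • B₂) (c₁ ^ (n + 1)) := by
  rw [chainPoly, Finset.Nat.sum_antidiagonal_succ, add_comm, chainPoly, Finset.mul_sum]
  congr 1
  · refine Finset.sum_congr rfl fun x _ => ?_
    rw [monomial_mul]
    congr 1
    · congr 1
      dsimp only
      rw [succ_nsmul]
      abel
    · ring
  · simp

theorem toSyn_lt_of_mem_antidiagonal (m : MonomialOrder σ) (hB : m.toSyn B₂ < m.toSyn B₁)
    (α : σ →₀ ℕ) {n : ℕ} {x : ℕ × ℕ} (hx : x ∈ antidiagonal n) (hxn : x ≠ (n, 0)) :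
    m.toSyn (α + x.1 • B₁ + x.2 • B₂) < m.toSyn (α + n • B₁) := by
  rw [Finset.HasAntidiagonal.mem_antidiagonal] at hx
  have hx₂ : x.2 ≠ 0 := fun h => hxn (Prod.ext (by omega) h)
  simp only [← hx, add_nsmul, ← add_assoc, map_add, map_nsmul]
  exact add_lt_add_right (nsmul_lt_nsmul_right hx₂ hB) _

theorem coeff_chainPoly_top (m : MonomialOrder σ) (hB : m.toSyn B₂ < m.toSyn B₁)
    (α : σ →₀ ℕ) (n : ℕ) : coeff (α + n • B₁) (chainPoly B₁ B₂ c₁ c₂ α n) = c₂ ^ n := by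
  rw [chainPoly, coeff_sum, Finset.sum_eq_single (n, 0)]
  · simp
  · intro x hx hxn
    rw [coeff_monomial,
      if_neg fun h => (toSyn_lt_of_mem_antidiagonal m hB α hx hxn).ne (by rw [h])]
  · simp

theorem toSyn_le_of_mem_support_chainPoly (m : MonomialOrder σ) (hB : m.toSyn B₂ < m.toSyn B₁)
    {α d : σ →₀ ℕ} {n : ℕ} (hd : d ∈ (chainPoly B₁ B₂ c₁ c₂ α n).support) :
    m.toSyn d ≤ m.toSyn (α + n • B₁) := by
  obtain ⟨x, hx, hdx⟩ := Finset.mem_biUnion.mp (support_sum hd)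
  rw [Finset.mem_singleton.mp (support_monomial_subset hdx)]
  by_cases hxn : x = (n, 0)
  · simp [hxn]
  · exact (toSyn_lt_of_mem_antidiagonal m hB α hx hxn).le

variable [NoZeroDivisors k]

theorem degree_chainPoly (m : MonomialOrder σ) (hB : m.toSyn B₂ < m.toSyn B₁) (hc₂ : c₂ ≠ 0)
    (α : σ →₀ ℕ) (n : ℕ) : m.degree (chainPoly B₁ B₂ c₁ c₂ α n) = α + n • B₁ := by
  refine m.toSyn.injective (le_antisymm ?_ (m.le_degree ?_))
  · exact m.degree_le_iff.mpr fun d hd => toSyn_le_of_mem_support_chainPoly m hB hd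
  · rw [mem_support_iff, coeff_chainPoly_top m hB]
    exact pow_ne_zero n hc₂

theorem leadingCoeff_chainPoly (m : MonomialOrder σ) (hB : m.toSyn B₂ < m.toSyn B₁)
    (hc₂ : c₂ ≠ 0) (α : σ →₀ ℕ) (n : ℕ) :
    m.leadingCoeff (chainPoly B₁ B₂ c₁ c₂ α n) = c₂ ^ n := by
  rw [MonomialOrder.leadingCoeff, degree_chainPoly m hB hc₂, coeff_chainPoly_top m hB]

end Chain

theorem MonomialOrder.eq_of_le_of_forall_degree_le {R : Type*} [CommRing R]
    (m : MonomialOrder σ) {I J : Ideal (MvPolynomial σ R)} (hIJ : I ≤ J)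
    {B : Set (MvPolynomial σ R)} (hBI : B ⊆ I) (hB : ∀ b ∈ B, IsUnit (m.leadingCoeff b))
    (h : ∀ f ∈ J, f ≠ 0 → ∃ b ∈ B, m.degree b ≤ m.degree f) : I = J := by
  refine le_antisymm hIJ fun f hf => ?_
  obtain ⟨g, r, hfr, -, hr⟩ := m.div_set hB f
  have hg : Finsupp.linearCombination _ (fun b : B => (b : MvPolynomial σ R)) g ∈ I :=
    Ideal.span_le.mpr hBI ((Finsupp.mem_span_iff_linearCombination _ _ _).mpr ⟨g, rfl⟩)
  obtain rfl : r = 0 := by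
    by_contra hr0
    have hrJ : r ∈ J := by
      rw [eq_sub_of_add_eq' hfr.symm]
      exact J.sub_mem hf (hIJ hg)
    obtain ⟨b, hb, hdeg⟩ := h r hrJ hr0
    exact hr _ ((m.degree_mem_support_iff r).mpr hr0) b hb hdeg
  rwa [hfr, add_zero]

end Contraction

section TwoVariables

noncomputable def biexp (i j : ℕ) : Fin 2 →₀ ℕ := Finsupp.single 0 i + Finsupp.single 1 j

theorem eq_biexp (d : Fin 2 →₀ ℕ) : d = biexp (d 0) (d 1) := by
  ext i
  fin_cases i <;> simp [biexp]

theorem biexp_inj {i j i' j' : ℕ} : biexp i j = biexp i' j' ↔ i = i' ∧ j = j' := by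
  simp [biexp, Finsupp.ext_iff, Fin.forall_fin_two]

theorem biexp_le_biexp {i j i' j' : ℕ} : biexp i j ≤ biexp i' j' ↔ i ≤ i' ∧ j ≤ j' := by
  simp [biexp, Finsupp.le_def, Fin.forall_fin_two]

theorem biexp_add_biexp (i j i' j' : ℕ) :
    biexp i j + biexp i' j' = biexp (i + i') (j + j') := by
  simp only [biexp, Finsupp.single_add]
  abel

theorem nsmul_biexp (n i j : ℕ) : n • biexp i j = biexp (n * i) (n * j) := by
  simp [biexp]

theorem monomial_biexp {k : Type*} [CommRing k] (i j : ℕ) (c : k) :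
    monomial (biexp i j) c = C c * X 0 ^ i * X 1 ^ j := by
  rw [X_pow_eq_monomial, X_pow_eq_monomial, C_mul_monomial, monomial_mul, mul_one, mul_one, biexp]

theorem lex_toSyn_biexp_lt_biexp {i j i' j' : ℕ} (h : i < i') :
    MonomialOrder.lex.toSyn (biexp i j) < MonomialOrder.lex.toSyn (biexp i' j') :=
  Finsupp.Lex.lt_iff.mpr ⟨0, fun l hl => absurd hl (Fin.not_lt_zero l),
    show biexp i j 0 < biexp i' j' 0 by simpa [biexp] using h⟩

variable {k : Type*} [Field k] {a1 a2 b1 b2 n : ℕ} {c1 c2 : k}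

theorem pPoly_eq_chainPoly (v : ℕ) :
    pPoly k b1 b2 v c1 c2 = chainPoly (biexp b1 0) (biexp 0 b2) c1 c2 0 v := by
  rw [chainPoly, Finset.Nat.sum_antidiagonal_eq_sum_range_succ_mk, pPoly]
  refine Finset.sum_congr rfl fun i _ => ?_
  simp [nsmul_biexp, biexp_add_biexp, monomial_biexp]

theorem qPoly_eq_chainPoly (h₁ : n * b1 ≤ a1) (h₂ : n * b2 ≤ a2) :
    qPoly k a1 a2 b1 b2 (n + 1) c1 c2 =
      chainPoly (biexp b1 0) (biexp 0 b2) c1 c2 (biexp (a1 + 1 - n * b1) (a2 + 1 - n * b2)) n := by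
  rw [chainPoly, Finset.Nat.sum_antidiagonal_eq_sum_range_succ_mk, qPoly]
  refine Finset.sum_congr rfl fun i hi => ?_
  have hi : i ≤ n := Nat.lt_succ_iff.mp (Finset.mem_range.mp hi)
  have e₁ : (n - i) * b1 + i * b1 = n * b1 := by rw [← add_mul, Nat.sub_add_cancel hi]
  have e₂ : i * b2 + (n - i) * b2 = n * b2 := by rw [← add_mul, Nat.add_sub_cancel' hi]
  rw [Nat.add_sub_cancel, ← monomial_biexp]
  congr 2
  simp only [nsmul_biexp, biexp_add_biexp, biexp_inj, mul_zero, add_zero]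
  omega

theorem binomial_eq_binomialForm (a1 a2 b1 b2 : ℕ) (c1 c2 : k) :
    (X 0 : MvPolynomial (Fin 2) k) ^ a1 * X 1 ^ a2 * (C c1 * X 0 ^ b1 - C c2 * X 1 ^ b2) =
      binomialForm (biexp a1 a2) (biexp b1 0) (biexp 0 b2) c1 c2 := by
  rw [binomialForm, biexp_add_biexp, biexp_add_biexp, monomial_biexp, monomial_biexp]
  ring

theorem le_lex_degree_of_mem_annIdeal (hc1 : c1 ≠ 0) (hc2 : c2 ≠ 0) (h₁ : n * b1 ≤ a1)
    (h₁' : a1 < n * b1 + b1) (h₂ : n * b2 ≤ a2) {f : MvPolynomial (Fin 2) k}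
    (hf : f ∈ annIdeal (binomialForm (biexp a1 a2) (biexp b1 0) (biexp 0 b2) c1 c2))
    (hf0 : f ≠ 0) :
    biexp (n * b1 + b1) 0 ≤ MonomialOrder.lex.degree f ∨
      biexp (a1 + 1) (a2 + 1 - n * b2) ≤ MonomialOrder.lex.degree f ∨
      biexp 0 (a2 + b2 + 1) ≤ MonomialOrder.lex.degree f := by
  obtain ⟨x, y, hd⟩ : ∃ x y, MonomialOrder.lex.degree f = biexp x y := ⟨_, _, eq_biexp _⟩
  have hlead : coeff (biexp x y) f ≠ 0 := hd ▸ MonomialOrder.lex.coeff_degree_ne_zero_iff.mpr hf0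
  have hmax : ∀ i j, x < i → coeff (biexp i j) f = 0 := fun i j h =>
    MonomialOrder.lex.coeff_eq_zero_of_lt (hd ▸ lex_toSyn_biexp_lt_biexp h)
  rw [hd, biexp_le_biexp, biexp_le_biexp, biexp_le_biexp]
  by_contra! h
  obtain ⟨hx, hxy, hy⟩ := h
  rcases le_or_gt x a1 with hxa | hxa
  · rcases lt_or_ge y b2 with hyb | hyb
    · refine hlead (coeff_eq_zero_of_mem_annIdeal_of_not_le_left hf hc2
        (β := biexp (a1 - x) (a2 + b2 - y)) ?_ ?_)
      · rw [biexp_add_biexp, biexp_add_biexp, biexp_inj]; omega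
      · rw [biexp_add_biexp, biexp_le_biexp]; omega
    · have hstep := coeff_add_eq_zero_iff_of_mem_annIdeal hf hc1 hc2
        (y := biexp x (y - b2)) (biexp_le_biexp.mpr (by omega))
      rw [biexp_add_biexp, biexp_add_biexp, add_zero, Nat.sub_add_cancel hyb] at hstep
      exact hlead (by simpa using hstep.mp (hmax _ _ (by omega)))
  -- Walk `n` steps along the diagonal direction `(-b1, b2)`; the endpoint lies in the strip
  -- `x < b1`, `y ≤ a2`, where every coefficient of `f` vanishes.
  · have hwalk := coeff_add_nsmul_eq_zero_iff_of_mem_annIdeal hf hc1 hc2 n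
      (z := biexp (x - n * b1) y)
      (by rw [nsmul_biexp, nsmul_biexp, biexp_add_biexp, biexp_add_biexp, biexp_add_biexp,
        biexp_add_biexp, biexp_le_biexp]; omega)
    simp only [nsmul_biexp, biexp_add_biexp, mul_zero, add_zero,
      Nat.sub_add_cancel (show n * b1 ≤ x by omega)] at hwalk
    refine hlead (hwalk.mpr (coeff_eq_zero_of_mem_annIdeal_of_not_le_right hf hc1
      (β := biexp (a1 + b1 - (x - n * b1)) (a2 - (y + n * b2))) ?_ ?_))
    · rw [biexp_add_biexp, biexp_add_biexp, biexp_inj]; omega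
    · rw [biexp_add_biexp, biexp_le_biexp]; omega

theorem monomial_mem_span_chainPoly (h₁' : a1 < n * b1 + b1) (h₂ : n * b2 ≤ a2) :
    monomial (biexp 0 (a2 + b2 + 1)) (c1 ^ (n + 1)) ∈ Ideal.span
      {chainPoly (biexp b1 0) (biexp 0 b2) c1 c2 0 (n + 1),
        chainPoly (biexp b1 0) (biexp 0 b2) c1 c2
          (biexp (a1 + 1 - n * b1) (a2 + 1 - n * b2)) n} := by
  have e₁ : biexp b1 0 + biexp 0 (a2 + 1 - n * b2) =
      biexp (b1 - (a1 + 1 - n * b1)) 0 + biexp (a1 + 1 - n * b1) (a2 + 1 - n * b2) := by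
    rw [biexp_add_biexp, biexp_add_biexp, biexp_inj]
    omega
  have e₂ : biexp 0 (a2 + 1 - n * b2) + (n + 1) • biexp 0 b2 = biexp 0 (a2 + b2 + 1) := by
    simp only [nsmul_biexp, biexp_add_biexp, biexp_inj, add_one_mul]
    omega
  have key : monomial (biexp 0 (a2 + 1 - n * b2)) 1 *
        chainPoly (biexp b1 0) (biexp 0 b2) c1 c2 0 (n + 1) =
      monomial (biexp (b1 - (a1 + 1 - n * b1)) 0) c2 *
          chainPoly (biexp b1 0) (biexp 0 b2) c1 c2
            (biexp (a1 + 1 - n * b1) (a2 + 1 - n * b2)) n +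
        monomial (biexp 0 (a2 + b2 + 1)) (c1 ^ (n + 1)) := by
    rw [monomial_mul_chainPoly, C_1, one_mul, add_zero, chainPoly_succ, monomial_mul_chainPoly,
      monomial_mul_chainPoly, e₁, e₂]
  rw [eq_sub_of_add_eq' key.symm]
  exact Ideal.sub_mem _ (Ideal.mul_mem_left _ _ (Ideal.subset_span (by simp)))
    (Ideal.mul_mem_left _ _ (Ideal.subset_span (by simp)))

theorem annIdeal_binomialForm_eq_span (hc1 : c1 ≠ 0) (hc2 : c2 ≠ 0) (h₁ : n * b1 ≤ a1)
    (h₁' : a1 < n * b1 + b1) (h₂ : n * b2 ≤ a2) (h₂' : a2 < n * b2 + b2) :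
    annIdeal (binomialForm (biexp a1 a2) (biexp b1 0) (biexp 0 b2) c1 c2) = Ideal.span
      {chainPoly (biexp b1 0) (biexp 0 b2) c1 c2 0 (n + 1),
        chainPoly (biexp b1 0) (biexp 0 b2) c1 c2
          (biexp (a1 + 1 - n * b1) (a2 + 1 - n * b2)) n} := by
  set P := chainPoly (biexp b1 0) (biexp 0 b2) c1 c2 0 (n + 1)
  set Q := chainPoly (biexp b1 0) (biexp 0 b2) c1 c2 (biexp (a1 + 1 - n * b1) (a2 + 1 - n * b2)) n
  set R : MvPolynomial (Fin 2) k := monomial (biexp 0 (a2 + b2 + 1)) (c1 ^ (n + 1))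
  have hB : MonomialOrder.lex.toSyn (biexp 0 b2) < MonomialOrder.lex.toSyn (biexp b1 0) :=
    lex_toSyn_biexp_lt_biexp (by omega)
  have hP : P ∈ annIdeal (binomialForm (biexp a1 a2) (biexp b1 0) (biexp 0 b2) c1 c2) := by
    refine chainPoly_mem_annIdeal ?_ ?_ <;>
      simp only [zero_add, nsmul_biexp, biexp_add_biexp, biexp_le_biexp, add_one_mul] <;> omega
  have hQ : Q ∈ annIdeal (binomialForm (biexp a1 a2) (biexp b1 0) (biexp 0 b2) c1 c2) := by
    refine chainPoly_mem_annIdeal ?_ ?_ <;>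
      simp only [nsmul_biexp, biexp_add_biexp, biexp_le_biexp] <;> omega
  have hdegP : MonomialOrder.lex.degree P = biexp (n * b1 + b1) 0 := by
    rw [degree_chainPoly _ hB hc2, zero_add, nsmul_biexp, mul_zero, add_one_mul]
  have hdegQ : MonomialOrder.lex.degree Q = biexp (a1 + 1) (a2 + 1 - n * b2) := by
    rw [degree_chainPoly _ hB hc2, nsmul_biexp, biexp_add_biexp, biexp_inj]
    omega
  have hdegR : MonomialOrder.lex.degree R = biexp 0 (a2 + b2 + 1) :=
    (MonomialOrder.degree_monomial _).trans (if_neg (pow_ne_zero _ hc1))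
  refine (MonomialOrder.lex.eq_of_le_of_forall_degree_le (B := {P, Q, R})
    (Ideal.span_le.mpr (Set.pair_subset hP hQ)) ?_ ?_ ?_).symm
  · exact Set.insert_subset (Ideal.subset_span (by simp)) <| Set.pair_subset
      (Ideal.subset_span (by simp)) (monomial_mem_span_chainPoly h₁' h₂)
  · simp only [Set.mem_insert_iff, Set.mem_singleton_iff, forall_eq_or_imp, forall_eq]
    refine ⟨?_, ?_, ?_⟩
    · rw [leadingCoeff_chainPoly _ hB hc2]; exact (pow_ne_zero _ hc2).isUnit
    · rw [leadingCoeff_chainPoly _ hB hc2]; exact (pow_ne_zero _ hc2).isUnit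
    · rw [MonomialOrder.leadingCoeff_monomial]; exact (pow_ne_zero _ hc1).isUnit
  · intro f hf hf0
    rcases le_lex_degree_of_mem_annIdeal hc1 hc2 h₁ h₁' h₂ hf hf0 with h | h | h
    · exact ⟨P, by simp, hdegP ▸ h⟩
    · exact ⟨Q, by simp, hdegQ ▸ h⟩
    · exact ⟨R, by simp, hdegR ▸ h⟩

end TwoVariables

theorem mul_le_of_forall_lt_mul {a b n : ℕ} (h : ∀ i, 1 ≤ i → a + 1 ≤ i * b → n + 1 ≤ i) :
    n * b ≤ a := by
  by_contra! hlt
  rcases n with _ | n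
  · simp at hlt
  · have := h (n + 1) (by omega) hlt
    omega

theorem stmt12_general (k : Type*) [Field k] (a1 a2 b1 b2 : ℕ)
    (c1 c2 : k) (hc1 : c1 ≠ 0) (hc2 : c2 ≠ 0)
    (v : ℕ)
    (hv1 : 1 ≤ v) (hv12 : a1 + 1 ≤ v * b1) (hv13 : ∀ i, 1 ≤ i → a1 + 1 ≤ i * b1 → v ≤ i)
    (hv22 : a2 + 1 ≤ v * b2) (hv23 : ∀ i, 1 ≤ i → a2 + 1 ≤ i * b2 → v ≤ i) :
    annSet ((MvPolynomial.X 0 : MvPolynomial (Fin 2) k) ^ a1 * MvPolynomial.X 1 ^ a2 *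
        (MvPolynomial.C c1 * MvPolynomial.X 0 ^ b1 - MvPolynomial.C c2 * MvPolynomial.X 1 ^ b2)) =
      ((Ideal.span {pPoly k b1 b2 v c1 c2, qPoly k a1 a2 b1 b2 v c1 c2}) :
        Set (MvPolynomial (Fin 2) k)) := by
  obtain ⟨n, rfl⟩ : ∃ n, v = n + 1 := ⟨v - 1, by omega⟩
  rw [add_one_mul] at hv12 hv22
  have h₁ := mul_le_of_forall_lt_mul hv13
  have h₂ := mul_le_of_forall_lt_mul hv23
  rw [binomial_eq_binomialForm, pPoly_eq_chainPoly, qPoly_eq_chainPoly h₁ h₂,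
    ← annIdeal_binomialForm_eq_span hc1 hc2 h₁ (by omega) h₂ (by omega)]
  rfl

/-- Lemma 2.8(3): for `F = X_1^{a_1}X_2^{a_2}(c_1 X_1^{b_1} - c_2 X_2^{b_2})` with
`v_1 = v_2 = v`, `Ann_R(F) = (p, q)`. -/
theorem stmt12 (k : Type*) [Field k] (a1 a2 b1 b2 : ℕ) (hb1 : 1 ≤ b1) (hb2 : 1 ≤ b2)
    (c1 c2 : k) (hc1 : c1 ≠ 0) (hc2 : c2 ≠ 0)
    (v : ℕ)
    (hv1 : 1 ≤ v) (hv12 : a1 + 1 ≤ v * b1) (hv13 : ∀ i, 1 ≤ i → a1 + 1 ≤ i * b1 → v ≤ i)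
    (hv22 : a2 + 1 ≤ v * b2) (hv23 : ∀ i, 1 ≤ i → a2 + 1 ≤ i * b2 → v ≤ i) :
    annSet ((MvPolynomial.X 0 : MvPolynomial (Fin 2) k) ^ a1 * MvPolynomial.X 1 ^ a2 *
        (MvPolynomial.C c1 * MvPolynomial.X 0 ^ b1 - MvPolynomial.C c2 * MvPolynomial.X 1 ^ b2)) =
      ((Ideal.span {pPoly k b1 b2 v c1 c2, qPoly k a1 a2 b1 b2 v c1 c2}) :
        Set (MvPolynomial (Fin 2) k)) :=
  stmt12_general k a1 a2 b1 b2 c1 c2 hc1 hc2 v hv1 hv12 hv13 hv22 hv23
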